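/- arXiv:2505.20504 — 2 statements merged into one kernel-verified Lean document; each statement's English description precedes it below -/
import Mathlib

section
/- Let T > 0, x_0 > 0, γ > 0, and let r : [0,T] → ℝ be continuous. Suppose X : [0,T) → ℝ satisfies X(0) = x_0 and X′(t) = X(t)r(t) − c(t) on (0,T), where c(t) = X(t)/B_{f₁}(t), f₁(t) = (β(t) − (1−γ)r(t))/γ, and the time preference function equals the interest rate, β(t) = r(t) for all t ∈ [0,T] (so f₁ = r). Then the consumption rate is constant: c(t) = x_0/B_r(0) for all t ∈ [0,T). -/
/-!
With `F(t) = ∫₀ᵗ r`, the annuity factor is `B_r(t) = e^{F(t)} ∫_t^T e^{-F(u)} du`, so it solves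
`B' = r B - 1`. If `X' = r X - X / B`, the quotient rule gives `(X / B)' = 0`; hence the
consumption `c = X / B` is constant and equal to its initial value `x₀ / B_r(0)`.
Since `r` is only continuous on `[0, T]`, we work with a continuous extension of it to `ℝ`,
which has the same annuity factor on `[0, T]`.
-/

open Set intervalIntegral

/-- The annuity value `B_f(t) = ∫_t^T exp(−∫_t^u f(s) ds) du`. -/
noncomputable def Bann (T : ℝ) (f : ℝ → ℝ) (t : ℝ) : ℝ :=
  ∫ u in t..T, Real.exp (-∫ s in t..u, f s)

/-- The rate `f₁(t) = (β(t) − (1−γ)r(t))/γ` determining the optimal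
wealth-to-consumption factor of a CRRA utility maximizer. -/
noncomputable def fOne (γ : ℝ) (r β : ℝ → ℝ) : ℝ → ℝ :=
  fun t => (β t - (1 - γ) * r t) / γ

theorem ContinuousOn.exists_continuous_eqOn_Icc {α β : Type*} [LinearOrder α]
    [TopologicalSpace α] [OrderTopology α] [TopologicalSpace β] {a b : α} {f : α → β}
    (hab : a ≤ b) (hf : ContinuousOn f (Icc a b)) :
    ∃ g : α → β, Continuous g ∧ EqOn g f (Icc a b) :=
  ⟨IccExtend hab ((Icc a b).domRestrict f), hf.domRestrict.Icc_extend',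
    fun _ hx => IccExtend_of_mem hab _ hx⟩

theorem eq_of_hasDerivAt_eq_zero_Ioo {f : ℝ → ℝ} {a b : ℝ} (hf : ContinuousOn f (Ico a b))
    (hf' : ∀ x ∈ Ioo a b, HasDerivAt f 0 x) : ∀ x ∈ Ico a b, f x = f a := by
  have hint : interior (Ico a b) = Ioo a b := interior_Ico
  have hdiff : DifferentiableOn ℝ f (interior (Ico a b)) := fun x hx =>
    (hf' x (hint ▸ hx)).differentiableAt.differentiableWithinAt
  have hderiv : ∀ x ∈ interior (Ico a b), deriv f x = 0 := fun x hx =>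
    (hf' x (hint ▸ hx)).deriv
  have hmono := monotoneOn_of_deriv_nonneg (convex_Ico a b) hf hdiff fun x hx => (hderiv x hx).ge
  have hanti := antitoneOn_of_deriv_nonpos (convex_Ico a b) hf hdiff fun x hx => (hderiv x hx).le
  intro x hx
  have ha : a ∈ Ico a b := ⟨le_rfl, hx.1.trans_lt hx.2⟩
  exact le_antisymm (hanti ha hx hx.1) (hmono ha hx hx.1)

theorem fOne_apply_of_eq {γ : ℝ} (hγ : γ ≠ 0) {r β : ℝ → ℝ} {t : ℝ} (h : β t = r t) :
    fOne γ r β t = r t := by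
  rw [fOne, h]
  field_simp
  ring

theorem Bann_congr {T t : ℝ} {f g : ℝ → ℝ} (htT : t ≤ T) (hfg : EqOn f g (Icc t T)) :
    Bann T f t = Bann T g t := by
  refine integral_congr fun u hu => ?_
  rw [uIcc_of_le htT] at hu
  have hsub : uIcc t u ⊆ Icc t T := by
    rw [uIcc_of_le hu.1]
    exact Icc_subset_Icc_right hu.2
  rw [integral_congr (hfg.mono hsub)]

section Continuous

variable {T : ℝ} {f : ℝ → ℝ}

theorem Bann_eq_exp_mul_integral (hf : Continuous f) (t : ℝ) :
    Bann T f t = Real.exp (∫ s in (0 : ℝ)..t, f s) *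
      ∫ u in t..T, Real.exp (-∫ s in (0 : ℝ)..u, f s) := by
  rw [Bann, ← integral_const_mul]
  refine integral_congr fun u _ => ?_
  rw [← integral_interval_sub_left (hf.intervalIntegrable _ _) (hf.intervalIntegrable _ _),
    ← Real.exp_add]
  ring_nf

theorem hasDerivAt_Bann (hf : Continuous f) (t : ℝ) :
    HasDerivAt (Bann T f) (f t * Bann T f t - 1) t := by
  set F : ℝ → ℝ := fun u => ∫ s in (0 : ℝ)..u, f s
  have hF : ∀ u, HasDerivAt F (f u) u := fun u => (hf.integral_hasStrictDerivAt 0 u).hasDerivAt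
  have hE : Continuous fun u => Real.exp (-F u) :=
    (continuous_iff_continuousAt.2 fun u => (hF u).continuousAt).neg.rexp
  have hG : HasDerivAt (fun t => ∫ u in t..T, Real.exp (-F u)) (-Real.exp (-F t)) t :=
    integral_hasDerivAt_left (hE.intervalIntegrable _ _) (hE.stronglyMeasurableAtFilter _ _)
      hE.continuousAt
  rw [show Bann T f = fun t => Real.exp (F t) * ∫ u in t..T, Real.exp (-F u) from
    funext (Bann_eq_exp_mul_integral hf)]
  refine ((hF t).exp.mul hG).congr_deriv ?_
  rw [Real.exp_neg]
  field_simp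
  ring

theorem continuous_Bann (hf : Continuous f) : Continuous (Bann T f) :=
  continuous_iff_continuousAt.2 fun t => (hasDerivAt_Bann hf t).continuousAt

theorem Bann_pos (hf : Continuous f) {t : ℝ} (ht : t < T) : 0 < Bann T f t := by
  have hE : Continuous fun u => Real.exp (-∫ s in (0 : ℝ)..u, f s) :=
    (continuous_primitive (fun _ _ => hf.intervalIntegrable _ _) 0).neg.rexp
  rw [Bann_eq_exp_mul_integral hf]
  exact mul_pos (Real.exp_pos _)
    (intervalIntegral_pos_of_pos (hE.intervalIntegrable _ _) (fun _ => Real.exp_pos _) ht)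

end Continuous

theorem hasDerivAt_div_eq_zero_of_ode {X B : ℝ → ℝ} {a t : ℝ}
    (hX : HasDerivAt X (X t * a - X t / B t) t) (hB : HasDerivAt B (a * B t - 1) t)
    (hBt : B t ≠ 0) : HasDerivAt (fun s => X s / B s) 0 t := by
  refine (hX.div hB hBt).congr_deriv ?_
  field_simp
  ring

theorem crra_consumption_constant_when_beta_eq_r_general (T : ℝ) (hT : 0 < T)
    (x₀ : ℝ) (γ : ℝ) (hγ : 0 < γ)
    (r β : ℝ → ℝ) (hr : ContinuousOn r (Icc 0 T))
    (hβr : ∀ t ∈ Icc (0 : ℝ) T, β t = r t)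
    (X c : ℝ → ℝ)
    (hX_cont : ContinuousOn X (Ico 0 T)) (hX0 : X 0 = x₀)
    (hc_def : ∀ t ∈ Ico (0 : ℝ) T, c t = X t / Bann T (fOne γ r β) t)
    (hX_ode : ∀ t ∈ Ioo (0 : ℝ) T, HasDerivAt X (X t * r t - c t) t) :
    ∀ t ∈ Ico (0 : ℝ) T, c t = x₀ / Bann T r 0 := by
  obtain ⟨ρ, hρ, hρr⟩ := hr.exists_continuous_eqOn_Icc hT.le
  have hB_ne : ∀ t < T, Bann T ρ t ≠ 0 := fun t ht => (Bann_pos hρ ht).ne'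
  have hc : ∀ t ∈ Ico (0 : ℝ) T, c t = X t / Bann T ρ t := fun t ht => by
    rw [hc_def t ht, Bann_congr ht.2.le fun s hs => ?_]
    have hs' : s ∈ Icc 0 T := ⟨ht.1.trans hs.1, hs.2⟩
    rw [fOne_apply_of_eq hγ.ne' (hβr s hs'), hρr hs']
  have hderiv : ∀ t ∈ Ioo (0 : ℝ) T, HasDerivAt (fun s => X s / Bann T ρ s) 0 t := fun t ht => by
    refine hasDerivAt_div_eq_zero_of_ode ?_ (hasDerivAt_Bann hρ t) (hB_ne t ht.2)
    simpa only [hρr (Ioo_subset_Icc_self ht), hc t (Ioo_subset_Ico_self ht)] using hX_ode t ht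
  have hconst := eq_of_hasDerivAt_eq_zero_Ioo (f := fun s => X s / Bann T ρ s)
    (hX_cont.div (continuous_Bann hρ).continuousOn fun t ht => hB_ne t ht.2) hderiv
  intro t ht
  rw [hc t ht, hconst t ht, hX0, Bann_congr hT.le hρr]

/-- If the time preference function equals the interest rate, `β = r` (so `f₁ = r`),
then the optimal CRRA consumption rate `c(t) = X(t)/B_{f₁}(t)` is constant, equal to
the martingale consumption level `x₀/B_r(0)`. -/
theorem crra_consumption_constant_when_beta_eq_r (T : ℝ) (hT : 0 < T)
    (x₀ : ℝ) (hx₀ : 0 < x₀) (γ : ℝ) (hγ : 0 < γ)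
    (r β : ℝ → ℝ) (hr : ContinuousOn r (Icc 0 T))
    (hβr : ∀ t ∈ Icc (0 : ℝ) T, β t = r t)
    (X c : ℝ → ℝ)
    (hX_cont : ContinuousOn X (Ico 0 T)) (hX0 : X 0 = x₀)
    (hc_def : ∀ t ∈ Ico (0 : ℝ) T, c t = X t / Bann T (fOne γ r β) t)
    (hX_ode : ∀ t ∈ Ioo (0 : ℝ) T, HasDerivAt X (X t * r t - c t) t) :
    ∀ t ∈ Ico (0 : ℝ) T, c t = x₀ / Bann T r 0 :=
  crra_consumption_constant_when_beta_eq_r_general T hT x₀ γ hγ r β hr hβr X c hX_cont hX0 hc_def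
    hX_ode
end

section
/- Fix an integer n ≥ 2 and a probability space (Ω, F, P). Let R_1, …, R_n be mutually independent integrable random variables with values in (−1,∞), and let F_i = σ(R_1,…,R_i). Define the (deterministic) numbers m_k = E[1+R_k] for k = 1,…,n, and a_i = 1 + Σ_{j=i+1}^n Π_{k=i+1}^j (1/m_k) for i = 1,…,n−1, with a_n = 1. Then a_i > 1 for i = 1,…,n−1 and, for every i = 1,…,n−1, E[(1+R_{i+1})/a_{i+1} | F_i] = 1/(a_i − 1) almost surely; i.e., the wealth-to-consumption factors given by discounting at the expected future returns yield a martingale consumption strategy when the returns are mutually independent. -/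
/-!
Since the returns are independent, `R_{i+1}` is independent of `F_i`, so the conditional
expectation in question is the constant `m_{i+1} / a_{i+1}`. The factors satisfy the backward
recursion `a_i = 1 + a_{i+1} / m_{i+1}`, hence `m_{i+1} / a_{i+1} = 1 / (a_i - 1)`; positivity of
the gross returns gives `m_k > 0` and therefore `a_i > 1`.
-/

open MeasureTheory

/-- The sigma-algebra `F_i = σ(R_1,…,R_i)` generated by the first `i` returns. -/
def returnFiltration {Ω : Type*} (R : ℕ → Ω → ℝ) (i : ℕ) : MeasurableSpace Ω :=
  ⨆ j ∈ Finset.Icc 1 i, MeasurableSpace.comap (R j) inferInstance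

open ProbabilityTheory Finset

def annuityFactor (d : ℕ → ℝ) (i n : ℕ) : ℝ :=
  1 + ∑ j ∈ Icc (i + 1) n, ∏ k ∈ Icc (i + 1) j, d k

section AnnuityFactor

variable (d : ℕ → ℝ) {i n : ℕ}

@[simp]
lemma annuityFactor_self (n : ℕ) : annuityFactor d n n = 1 := by
  simp [annuityFactor]

lemma annuityFactor_of_lt (h : i < n) :
    annuityFactor d i n = 1 + d (i + 1) * annuityFactor d (i + 1) n := by
  have hprod : ∀ j ∈ Icc (i + 1 + 1) n,
      ∏ k ∈ Icc (i + 1) j, d k = d (i + 1) * ∏ k ∈ Icc (i + 1 + 1) j, d k := by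
    intro j hj
    rw [← insert_Icc_add_one_left_eq_Icc (by simp at hj; omega), prod_insert (by simp)]
  rw [annuityFactor, annuityFactor, ← insert_Icc_add_one_left_eq_Icc h, sum_insert (by simp),
    Icc_self, prod_singleton, sum_congr rfl hprod, ← mul_sum]
  ring

lemma one_lt_annuityFactor (h : i < n) (hd : ∀ k ∈ Ioc i n, 0 < d k) :
    1 < annuityFactor d i n :=
  lt_add_of_pos_right 1 <| sum_pos
    (fun j hj ↦ prod_pos fun k hk ↦ hd k (by simp only [mem_Icc, mem_Ioc] at hj hk ⊢; omega))
    (nonempty_Icc.2 h)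

end AnnuityFactor

lemma integral_pos_of_forall_pos {α : Type*} [MeasurableSpace α] {μ : Measure α} [NeZero μ]
    {f : α → ℝ} (hf : ∀ x, 0 < f x) (hfi : Integrable f μ) : 0 < ∫ x, f x ∂μ := by
  have hsupp : Function.support f = Set.univ :=
    Set.eq_univ_of_forall fun x ↦ (hf x).ne'
  rw [integral_pos_iff_support_of_nonneg (fun x ↦ (hf x).le) hfi, hsupp]
  exact Measure.measure_univ_pos.2 (NeZero.ne μ)

section Independence

variable {Ω ι : Type*} [mΩ : MeasurableSpace Ω] {μ : Measure Ω}

lemma indep_comap_biSup_comap_of_iIndepFun {β : ι → Type*} [∀ i, MeasurableSpace (β i)]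
    {X : ∀ i, Ω → β i} {s : Finset ι} (hX : ∀ i ∈ s, Measurable (X i))
    (hindep : iIndepFun (fun j : {k // k ∈ s} ↦ X j.1) μ)
    {k : ι} (hk : k ∈ s) {T : Finset ι} (hT : T ⊆ s) (hkT : k ∉ T) :
    Indep (MeasurableSpace.comap (X k) inferInstance)
      (⨆ j ∈ T, MeasurableSpace.comap (X j) inferInstance) μ := by
  have hdisj : Disjoint {j : {k // k ∈ s} | j.1 = k} {j | j.1 ∈ T} :=
    Set.disjoint_left.2 fun j (hjk : j.1 = k) (hjT : j.1 ∈ T) ↦ hkT (hjk ▸ hjT)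
  refine indep_of_indep_of_le_right (indep_of_indep_of_le_left
    (indep_iSup_of_disjoint (fun j ↦ (hX j.1 j.2).comap_le) hindep.iIndep hdisj) ?_) ?_
  · exact le_iSup₂_of_le (⟨k, hk⟩ : {k // k ∈ s}) rfl le_rfl
  · exact iSup₂_le fun j hj ↦ le_iSup₂_of_le (⟨j, hT hj⟩ : {k // k ∈ s}) hj le_rfl

lemma condExp_comp_of_indep_comap {β E : Type*} [MeasurableSpace β] [NormedAddCommGroup E]
    [NormedSpace ℝ E] [CompleteSpace E] [IsFiniteMeasure μ] {X : Ω → β} (hX : Measurable X)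
    {m : MeasurableSpace Ω} (hm : m ≤ mΩ)
    (hXm : Indep (MeasurableSpace.comap X inferInstance) m μ)
    {g : β → E} (hg : StronglyMeasurable g) :
    μ[g ∘ X | m] =ᵐ[μ] fun _ ↦ ∫ ω, g (X ω) ∂μ :=
  condExp_indep_eq hX.comap_le hm (hg.comp_measurable (comap_measurable X)) hXm

lemma returnFiltration_le {R : ℕ → Ω → ℝ} (hR : ∀ j, Measurable (R j)) (i : ℕ) :
    returnFiltration R i ≤ mΩ :=
  iSup₂_le fun j _ ↦ (hR j).comap_le

end Independence

theorem discrete_independent_returns_martingale_general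
    {Ω : Type*} [MeasurableSpace Ω] (μ : Measure Ω) [IsProbabilityMeasure μ]
    (n : ℕ)
    (R : ℕ → Ω → ℝ)
    (hR_meas : ∀ i, Measurable (R i))
    (hR_val : ∀ i ∈ Finset.Icc 1 n, ∀ ω, -1 < R i ω)
    (hR_int : ∀ i ∈ Finset.Icc 1 n, Integrable (R i) μ)
    (hR_indep : ProbabilityTheory.iIndepFun
      (fun j : {k : ℕ // k ∈ Finset.Icc 1 n} => R j.1) μ)
    (m : ℕ → ℝ) (hm : ∀ k, m k = ∫ ω, (1 + R k ω) ∂μ)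
    (a : ℕ → ℝ) (ha_n : a n = 1)
    (ha : ∀ i ∈ Finset.Icc 1 (n - 1),
      a i = 1 + ∑ j ∈ Finset.Icc (i + 1) n, ∏ k ∈ Finset.Icc (i + 1) j, (1 / m k)) :
    (∀ i ∈ Finset.Icc 1 (n - 1), 1 < a i) ∧
    (∀ i ∈ Finset.Icc 1 (n - 1),
      μ[fun ω => (1 + R (i + 1) ω) / a (i + 1) | returnFiltration R i]
        =ᵐ[μ] fun _ => 1 / (a i - 1)) := by
  have hm_pos : ∀ k ∈ Icc 1 n, 0 < m k := fun k hk ↦ hm k ▸ integral_pos_of_forall_pos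
    (fun ω ↦ by linarith [hR_val k hk ω]) ((integrable_const 1).add (hR_int k hk))
  have ha_eq : ∀ i ∈ Icc 1 n, a i = annuityFactor (fun k ↦ 1 / m k) i n := by
    intro i hi
    obtain ⟨hi1, hin⟩ := mem_Icc.1 hi
    rcases hin.lt_or_eq with hlt | rfl
    · exact ha i (mem_Icc.2 ⟨hi1, by omega⟩)
    · rw [ha_n, annuityFactor_self]
  refine ⟨fun i hi ↦ ?_, fun i hi ↦ ?_⟩ <;> obtain ⟨hi1, hin⟩ := mem_Icc.1 hi
  · rw [ha_eq i (mem_Icc.2 ⟨hi1, by omega⟩)]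
    exact one_lt_annuityFactor _ (by omega) fun k hk ↦
      one_div_pos.2 (hm_pos k (by simp only [mem_Ioc, mem_Icc] at hk ⊢; omega))
  have hsucc : i + 1 ∈ Icc 1 n := mem_Icc.2 ⟨by omega, by omega⟩
  have hrec : a i - 1 = a (i + 1) / m (i + 1) := by
    rw [ha_eq i (mem_Icc.2 ⟨hi1, by omega⟩), ha_eq (i + 1) hsucc,
      annuityFactor_of_lt _ (by omega)]
    ring
  have hindep := indep_comap_biSup_comap_of_iIndepFun (fun j _ ↦ hR_meas j) hR_indep hsucc
    (T := Icc 1 i) (Icc_subset_Icc_right (by omega)) (by simp)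
  refine (condExp_comp_of_indep_comap (g := fun x ↦ (1 + x) / a (i + 1)) (hR_meas (i + 1))
    (returnFiltration_le hR_meas i) hindep (by fun_prop)).trans (.of_forall fun _ ↦ ?_)
  rw [integral_div, ← hm, hrec, one_div_div]

/-- When the returns `R_1,…,R_n` are mutually independent, the wealth-to-consumption
factors `a_i = 1 + Σ_{j=i+1}^n Π_{k=i+1}^j 1/m_k` obtained by discounting at the
expected gross returns `m_k = E[1+R_k]` satisfy `a_i > 1` and
`E[(1+R_{i+1})/a_{i+1} | F_i] = 1/(a_i − 1)` a.s., i.e., they yield a martingale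
consumption strategy. -/
theorem discrete_independent_returns_martingale
    {Ω : Type*} [MeasurableSpace Ω] (μ : Measure Ω) [IsProbabilityMeasure μ]
    (n : ℕ) (hn : 2 ≤ n)
    (R : ℕ → Ω → ℝ)
    (hR_meas : ∀ i, Measurable (R i))
    (hR_val : ∀ i ∈ Finset.Icc 1 n, ∀ ω, -1 < R i ω)
    (hR_int : ∀ i ∈ Finset.Icc 1 n, Integrable (R i) μ)
    (hR_indep : ProbabilityTheory.iIndepFun
      (fun j : {k : ℕ // k ∈ Finset.Icc 1 n} => R j.1) μ)
    (m : ℕ → ℝ) (hm : ∀ k, m k = ∫ ω, (1 + R k ω) ∂μ)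
    (a : ℕ → ℝ) (ha_n : a n = 1)
    (ha : ∀ i ∈ Finset.Icc 1 (n - 1),
      a i = 1 + ∑ j ∈ Finset.Icc (i + 1) n, ∏ k ∈ Finset.Icc (i + 1) j, (1 / m k)) :
    (∀ i ∈ Finset.Icc 1 (n - 1), 1 < a i) ∧
    (∀ i ∈ Finset.Icc 1 (n - 1),
      μ[fun ω => (1 + R (i + 1) ω) / a (i + 1) | returnFiltration R i]
        =ᵐ[μ] fun _ => 1 / (a i - 1)) :=
  discrete_independent_returns_martingale_general μ n R hR_meas hR_val hR_int hR_indep m hm a ha_n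
    ha
end
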